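/- arXiv:1302.1021 — 3 statements merged into one kernel-verified Lean document; each statement's English description precedes it below -/
import Mathlib

section
/- Let A be an abelian group, let c : A → ℤ and w : A → ℝ be group homomorphisms, and let n be a natural number. Then the following are equivalent: (a) for every a ∈ A with 3 - n ≤ c(a) < 0 one has w(a) ≤ 0; (b) at least one of the following holds: (i) there exists a real number α ≥ 0 such that w(a) = α · c(a) for all a ∈ A; (ii) c(a) = 0 for all a ∈ A; (iii) c is not identically zero and the unique positive integer N with c(A) = N·ℤ satisfies N ≥ n - 2. -/
lemma int_mul_bdd {x b : ℝ} (h : ∀ k : ℤ, (k : ℝ) * x ≤ b) : x = 0 := by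
  by_contra hx
  rcases lt_or_gt_of_ne hx with hneg | hpos
  · obtain ⟨k, hk⟩ := exists_int_lt (b / x)
    have h1 : b / x * x < (k : ℝ) * x := mul_lt_mul_of_neg_right hk hneg
    rw [div_mul_cancel₀ b hx] at h1
    exact absurd (h k) (not_le.mpr h1)
  · obtain ⟨k, hk⟩ := exists_int_gt (b / x)
    have h1 : b / x * x < (k : ℝ) * x := mul_lt_mul_of_pos_right hk hpos
    rw [div_mul_cancel₀ b hx] at h1
    exact absurd (h k) (not_le.mpr h1)

/-- Algebraic characterization of semi-positivity (Lemma 1.3):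
for an abelian group `A` with homomorphisms `c : A → ℤ` and `w : A → ℝ`,
the semi-positivity condition `(a)` is equivalent to the disjunction of
(i) `w = α • c` for some `α ≥ 0`, (ii) `c ≡ 0`, (iii) the minimal Chern
number `N` (the unique positive generator of the image of `c`) satisfies
`N ≥ n - 2`. -/
theorem semi_positive_characterization
    {A : Type*} [AddCommGroup A] (c : A →+ ℤ) (w : A →+ ℝ) (n : ℕ) :
    (∀ a : A, (3 : ℤ) - (n : ℤ) ≤ c a → c a < 0 → w a ≤ 0) ↔
      ((∃ α : ℝ, 0 ≤ α ∧ ∀ a : A, w a = α * (c a : ℝ)) ∨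
        (∀ a : A, c a = 0) ∨
        ((∃ a : A, c a ≠ 0) ∧
          ∃ N : ℕ, 0 < N ∧ c.range = AddSubgroup.zmultiples (N : ℤ) ∧
            (n : ℤ) - 2 ≤ (N : ℤ))) := by
  constructor
  · intro ha
    by_cases h0 : ∀ a : A, c a = 0
    · exact Or.inr (Or.inl h0)
    push_neg at h0
    obtain ⟨a₁, ha₁⟩ := h0
    obtain ⟨g, hg⟩ := Int.subgroup_cyclic c.range
    rw [← AddSubgroup.zmultiples_eq_closure] at hg
    set N : ℕ := g.natAbs with hNdef
    have hgN : c.range = AddSubgroup.zmultiples (N : ℤ) := by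
      rw [hg, Int.zmultiples_natAbs]
    have hNpos : 0 < N := by
      rcases Nat.eq_zero_or_pos N with h | h
      · exfalso
        have : c a₁ ∈ c.range := ⟨a₁, rfl⟩
        rw [hgN, h] at this
        simp [Int.mem_zmultiples_iff] at this
        exact ha₁ this
      · exact h
    by_cases hN : (n : ℤ) - 2 ≤ (N : ℤ)
    · exact Or.inr (Or.inr ⟨⟨a₁, ha₁⟩, N, hNpos, hgN, hN⟩)
    -- now N ≤ n - 3
    push_neg at hN
    have hN3 : (N : ℤ) ≤ (n : ℤ) - 3 := by omega
    have hmem : (N : ℤ) ∈ c.range := by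
      rw [hgN]; exact AddSubgroup.mem_zmultiples _
    obtain ⟨a₀, ha₀⟩ := hmem
    have hwneg : ∀ a : A, c a = -(N : ℤ) → w a ≤ 0 := by
      intro a hca
      apply ha a <;> omega
    have hker : ∀ b : A, c b = 0 → w b = 0 := by
      intro b hb
      apply int_mul_bdd (b := w a₀)
      intro k
      have h1 : c (k • b - a₀) = -(N : ℤ) := by
        simp [hb, ha₀]
      have := hwneg _ h1
      simp at this
      linarith
    have hwa₀ : 0 ≤ w a₀ := by
      have := hwneg (-a₀) (by simp [ha₀])
      simp at this
      linarith
    refine Or.inl ⟨w a₀ / N, div_nonneg hwa₀ (by positivity), fun a => ?_⟩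
    have hmem' : c a ∈ AddSubgroup.zmultiples ((N : ℤ)) := by
      rw [← hgN]; exact ⟨a, rfl⟩
    obtain ⟨k, hk⟩ := Int.mem_zmultiples_iff.mp hmem'
    have h2 : c (a - k • a₀) = 0 := by simp [hk, ha₀, mul_comm]
    have h3 := hker _ h2
    simp at h3
    have hNne : ((N : ℤ) : ℝ) ≠ 0 := by positivity
    have h4 : w a = k * w a₀ := by linarith
    rw [h4, hk]
    push_cast
    field_simp
  · rintro (⟨α, hα, hw⟩ | h0 | ⟨_, N, hNpos, hrange, hN⟩) a h1 h2
    · rw [hw a]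
      have : (c a : ℝ) < 0 := by exact_mod_cast h2
      nlinarith
    · rw [h0 a] at h2; omega
    · exfalso
      have : c a ∈ AddSubgroup.zmultiples ((N : ℤ)) := by
        rw [← hrange]; exact ⟨a, rfl⟩
      obtain ⟨k, hk⟩ := Int.mem_zmultiples_iff.mp this
      have hk1 : k ≤ -1 := by
        rcases lt_or_ge k 0 with h | h
        · omega
        · exfalso; nlinarith [hk ▸ h2]
      nlinarith [hk ▸ h1, hk ▸ h2]
end

section
/- Let W be a compact metrizable topological space, let V ⊆ W be an open dense subset, let X be a Hausdorff topological space, and let f : W → X be a continuous map. Then the limit set of the restriction f|_V : V → X equals f(W ∖ V), i.e. Ω_{f|_V} = f(W ∖ V). -/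
/-- Proposition 3.4(iii): if `W` is a compact metrizable space, `V ⊆ W` is open and
dense, `X` is Hausdorff and `f : W → X` is continuous, then the limit set of the
restriction `f|_V`, namely `⋂_{K ⊆ V compact} closure (f|_V '' (V ∖ K))`,
equals `f(W ∖ V)`. -/
theorem limit_set_of_restriction
    {W X : Type*} [TopologicalSpace W] [CompactSpace W]
    [TopologicalSpace.MetrizableSpace W]
    [TopologicalSpace X] [T2Space X]
    (V : Set W) (hVopen : IsOpen V) (hVdense : Dense V)
    {f : W → X} (hf : Continuous f) :
    (⋂ (K : Set V) (_ : IsCompact K), closure ((fun v : V => f v) '' Kᶜ))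
      = f '' Vᶜ := by
  have hval : Topology.IsEmbedding (Subtype.val : V → W) := Topology.IsEmbedding.subtypeVal
  apply Set.Subset.antisymm
  · intro x hx
    simp only [Set.mem_iInter] at hx
    by_contra hxf
    -- separate x from the compact set f '' Vᶜ
    have hVc : IsCompact (Vᶜ : Set W) := hVopen.isClosed_compl.isCompact
    have hC : IsCompact (f '' Vᶜ) := hVc.image hf
    have hdis : Disjoint ({x} : Set X) (f '' Vᶜ) := by
      simpa [Set.disjoint_singleton_left] using hxf
    obtain ⟨U, U', hU, hU', hxU, hCU', hUU'⟩ :=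
      SeparatedNhds.of_isCompact_isCompact isCompact_singleton hC hdis
    -- C is a compact subset of V
    set C : Set W := (f ⁻¹' U')ᶜ with hCdef
    have hCclosed : IsClosed C := (hU'.preimage hf).isClosed_compl
    have hCcpt : IsCompact C := hCclosed.isCompact
    have hCV : C ⊆ V := by
      intro w hw
      by_contra hwV
      exact hw (hCU' ⟨w, hwV, rfl⟩)
    set K : Set V := Subtype.val ⁻¹' C with hKdef
    have hKcpt : IsCompact K := by
      rw [hval.isCompact_iff]
      have : Subtype.val '' K = C := by
        apply Set.Subset.antisymm
        · rintro _ ⟨⟨v, hv⟩, hvK, rfl⟩; exact hvK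
        · intro w hw
          exact ⟨⟨w, hCV hw⟩, hw, rfl⟩
      rwa [this]
    have hximg := hx K hKcpt
    -- every point of the image lies in U'
    have himg : (fun v : V => f v) '' Kᶜ ⊆ U' := by
      rintro _ ⟨⟨v, hv⟩, hvK, rfl⟩
      have : v ∉ C := hvK
      simpa [hCdef] using this
    have : x ∈ closure U' := closure_mono himg hximg
    rw [mem_closure_iff] at this
    obtain ⟨y, hyU, hyU'⟩ := this U hU (hxU rfl)
    exact hUU'.le_bot ⟨hyU, hyU'⟩ |>.elim
  · -- f '' Vᶜ ⊆ every closure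
    intro x hx
    obtain ⟨w, hwV, rfl⟩ := hx
    simp only [Set.mem_iInter]
    intro K hK
    have hCcpt : IsCompact (Subtype.val '' K : Set W) := hK.image continuous_subtype_val
    have hCclosed : IsClosed (Subtype.val '' K : Set W) := hCcpt.isClosed
    -- w is in the closure of V \ (val '' K)
    have hwcl : w ∈ closure (V \ Subtype.val '' K) := by
      rw [mem_closure_iff]
      intro O hO hwO
      have hwnotC : w ∉ (Subtype.val '' K : Set W) := by
        rintro ⟨⟨v, hv⟩, _, rfl⟩; exact hwV hv
      have hO' : IsOpen (O ∩ (Subtype.val '' K)ᶜ) := hO.inter hCclosed.isOpen_compl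
      obtain ⟨y, hyV, hyO⟩ := hVdense.exists_mem_open hO' ⟨w, hwO, hwnotC⟩
      exact ⟨y, hyO.1, hyV, hyO.2⟩
    have himg : V \ Subtype.val '' K ⊆ Subtype.val '' (Kᶜ : Set V) := by
      rintro y ⟨hyV, hyK⟩
      exact ⟨⟨y, hyV⟩, fun h => hyK ⟨⟨y, hyV⟩, h, rfl⟩, rfl⟩
    have h1 : f w ∈ closure (f '' (V \ Subtype.val '' K)) := by
      have := image_closure_subset_closure_image (s := V \ Subtype.val '' K) hf
      exact this ⟨w, hwcl, rfl⟩
    have h2 : f '' (V \ Subtype.val '' K) ⊆ (fun v : V => f v) '' Kᶜ := by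
      rintro _ ⟨y, hy, rfl⟩
      obtain ⟨v, hvK, rfl⟩ := himg hy
      exact ⟨v, hvK, rfl⟩
    exact closure_mono h2 h1
end

section
/- Let U be a locally compact, σ-compact metrizable topological space, let Y be a compact metrizable topological space, let Z be a metrizable topological space, and let e : U → Z and f : Y → Z be continuous maps. Assume that the limit set of e is disjoint from the image of f, i.e. Ω_e ∩ f(Y) = ∅. Then the set Δ := {(u,v) ∈ U × Y : e(u) = f(v)} is a compact subset of U × Y. -/
/-- Key claim in Theorem 3.8: if `e : U → Z` is continuous with `U` locally compact,
σ-compact and metrizable, `f : Y → Z` is continuous with `Y` compact metrizable,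
`Z` metrizable, and the limit set `Ω_e = ⋂_{K ⊆ U compact} closure (e '' (U ∖ K))`
is disjoint from the image of `f`, then `Δ = {(u,v) | e u = f v}` is compact. -/
theorem intersection_locus_isCompact
    {U Y Z : Type*} [TopologicalSpace U] [LocallyCompactSpace U] [SigmaCompactSpace U]
    [TopologicalSpace.MetrizableSpace U]
    [TopologicalSpace Y] [CompactSpace Y] [TopologicalSpace.MetrizableSpace Y]
    [TopologicalSpace Z] [TopologicalSpace.MetrizableSpace Z]
    {e : U → Z} (he : Continuous e) {f : Y → Z} (hf : Continuous f)
    (hdisj : (⋂ (K : Set U) (_ : IsCompact K), closure (e '' Kᶜ)) ∩ (f '' Set.univ) = ∅) :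
    IsCompact {p : U × Y | e p.1 = f p.2} := by
  haveI : T2Space Z := inferInstance
  -- the image of f is compact
  have hC : IsCompact (f '' Set.univ) := (isCompact_univ).image hf
  -- A := e ⁻¹' (f '' univ)
  set A : Set U := e ⁻¹' (f '' Set.univ) with hA
  -- claim: A is contained in some element of a compact exhaustion
  obtain K := CompactExhaustion.choice U
  have hsub : ∃ n, A ⊆ K n := by
    by_contra h
    push_neg at h
    simp only [Set.not_subset] at h
    choose x hxA hxK using h
    have hxC : ∀ n, e (x n) ∈ f '' Set.univ := fun n => hxA n
    obtain ⟨z, hzC, φ, hφ, hlim⟩ := hC.tendsto_subseq hxC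
    have hzΩ : z ∈ ⋂ (K' : Set U) (_ : IsCompact K'), closure (e '' K'ᶜ) := by
      refine Set.mem_iInter₂.2 fun K' hK' => ?_
      obtain ⟨m, hm⟩ := K.exists_superset_of_isCompact hK'
      refine mem_closure_of_tendsto hlim ?_
      filter_upwards [Filter.eventually_ge_atTop m] with n hn
      refine ⟨x (φ n), ?_, rfl⟩
      intro hmem
      exact hxK (φ n) (K.subset (hn.trans (hφ.le_apply)) (hm hmem))
    exact Set.eq_empty_iff_forall_notMem.mp hdisj z (Set.mem_inter hzΩ hzC)
  obtain ⟨n, hn⟩ := hsub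
  -- Δ is a closed subset of (K n) ×ˢ univ
  have hΔclosed : IsClosed {p : U × Y | e p.1 = f p.2} :=
    isClosed_eq (he.comp continuous_fst) (hf.comp continuous_snd)
  refine ((K.isCompact n).prod isCompact_univ).of_isClosed_subset hΔclosed ?_
  rintro ⟨u, v⟩ h
  exact ⟨hn ⟨v, Set.mem_univ v, h.symm⟩, Set.mem_univ v⟩
end
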